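/- Let K⃗ be a complete symmetric digraph on an arbitrary (finite or infinite) vertex set, and let c : E(K⃗) → {1,...,r+1} be an edge-colouring such that for each i ∈ {1,...,r}, there is no directed path of length ℓᵢ all of whose edges have colour i. Then the vertex set can be partitioned into at most ℓ₁·ℓ₂···ℓ_r sets, each of which spans a complete symmetric digraph all of whose edges have colour r+1. -/

import Mathlib

/-!
Gallai–Roy for each of the first `r` colours, then a product colouring. If a relation `E` has no
injective walk of length `L`, take (by Zorn) a maximal acyclic subrelation `M ≤ E` and colour a
vertex by the length of the longest `M`-walk ending at it; `M`-walks are injective, so these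
lengths are `< L`. An `M`-edge strictly raises the colour, and an `E`-edge `u → v` outside `M`
closes a cycle with `M` by maximality, so `M` leads from `v` to `u` and the colour drops. Hence
`E`-adjacent vertices get distinct colours among `L`. Colouring each vertex by the tuple of its
colours in the first `r` colour classes, two distinct vertices of the same colour can only be
joined by an edge of the last colour.
-/

open Relation Function

section

variable {V : Type*}

def IsAcyclic (R : V → V → Prop) : Prop :=
  ∀ a, ¬TransGen R a a

def IsWalk (R : V → V → Prop) {k : ℕ} (w : Fin (k + 1) → V) : Prop :=
  ∀ j : Fin k, R (w j.castSucc) (w j.succ)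

namespace IsWalk

variable {R S : V → V → Prop} {k : ℕ} {w : Fin (k + 1) → V}

theorem mono (hRS : R ≤ S) (hw : IsWalk R w) : IsWalk S w :=
  fun j => hRS _ _ (hw j)

theorem castLE {m : ℕ} (hw : IsWalk R w) (hmk : m ≤ k) :
    IsWalk R (fun j : Fin (m + 1) => w (Fin.castLE (by omega) j)) :=
  fun j => hw (Fin.castLE hmk j)

theorem snoc (hw : IsWalk R w) {v : V} (hv : R (w (Fin.last k)) v) :
    IsWalk R (Fin.snoc w v : Fin (k + 2) → V) := by
  intro j
  induction j using Fin.lastCases with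
  | last => simpa only [Fin.succ_last, Fin.snoc_castSucc, Fin.snoc_last] using hv
  | cast j => simpa only [Fin.succ_castSucc, Fin.snoc_castSucc] using hw j

theorem injective (hR : IsAcyclic R) (hw : IsWalk R w) : Injective w := by
  have : IsTrans V (TransGen R) := ⟨fun _ _ _ => TransGen.trans⟩
  have hlt : ∀ i j, i < j → TransGen R (w i) (w j) :=
    (Fin.liftFun_iff_succ _).2 fun j => .single (hw j)
  intro i j hij
  by_contra hne
  rcases lt_or_gt_of_ne hne with h | h
  · exact hR _ (hij ▸ hlt i j h)
  · exact hR _ (hij ▸ hlt j i h)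

end IsWalk

theorem IsChain.exists_transGen_of_transGen_sSup {C : Set (V → V → Prop)}
    (hC : IsChain (· ≤ ·) C) {a b : V} (h : TransGen (sSup C) a b) :
    ∃ R ∈ C, TransGen R a b := by
  induction h with
  | single hab =>
    obtain ⟨R, hR, hab⟩ : ∃ R ∈ C, R _ _ := by simpa using hab
    exact ⟨R, hR, .single hab⟩
  | tail _ hbc ih =>
    obtain ⟨R, hR, hab⟩ := ih
    obtain ⟨S, hS, hbc⟩ : ∃ S ∈ C, S _ _ := by simpa using hbc
    rcases hC.total hR hS with hRS | hSR
    · exact ⟨S, hS, (TransGen.mono hRS _ _ hab).tail hbc⟩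
    · exact ⟨R, hR, hab.tail (hSR _ _ hbc)⟩

theorem exists_maximal_acyclic_le (E : V → V → Prop) :
    ∃ M, Maximal (fun R => R ≤ E ∧ IsAcyclic R) M := by
  refine zorn_le₀ {R | R ≤ E ∧ IsAcyclic R} fun C hCs hC => ?_
  refine ⟨sSup C, ⟨sSup_le fun R hR => (hCs hR).1, fun a ha => ?_⟩, fun R hR => le_sSup hR⟩
  obtain ⟨R, hR, hcyc⟩ := hC.exists_transGen_of_transGen_sSup ha
  exact (hCs hR).2 a hcyc

theorem transGen_or_reflTransGen_of_transGen_add_edge {R : V → V → Prop} {u v a b : V}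
    (h : TransGen (fun x y => R x y ∨ x = u ∧ y = v) a b) :
    TransGen R a b ∨ ReflTransGen R a u ∧ ReflTransGen R v b := by
  induction h with
  | single hab =>
    rcases hab with hab | ⟨rfl, rfl⟩
    · exact .inl (.single hab)
    · exact .inr ⟨.refl, .refl⟩
  | tail _ hbc ih =>
    rcases hbc with hbc | ⟨rfl, rfl⟩
    · rcases ih with hab | ⟨hau, hvb⟩
      · exact .inl (hab.tail hbc)
      · exact .inr ⟨hau, hvb.tail hbc⟩
    · rcases ih with hab | ⟨hau, -⟩
      · exact .inr ⟨hab.to_reflTransGen, .refl⟩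
      · exact .inr ⟨hau, .refl⟩

theorem Maximal.reflTransGen_of_not_rel {E M : V → V → Prop}
    (hM : Maximal (fun R => R ≤ E ∧ IsAcyclic R) M) {u v : V}
    (hE : E u v) (hMuv : ¬M u v) : ReflTransGen M v u := by
  by_contra hvu
  have hacyclic : IsAcyclic fun x y => M x y ∨ x = u ∧ y = v := by
    intro a ha
    rcases transGen_or_reflTransGen_of_transGen_add_edge ha with hcyc | ⟨hau, hva⟩
    · exact hM.1.2 a hcyc
    · exact hvu (hva.trans hau)
  have hle : (fun x y => M x y ∨ x = u ∧ y = v) ≤ M := by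
    refine hM.2 ⟨fun x y hxy => ?_, hacyclic⟩ fun x y hxy => .inl hxy
    rcases hxy with hxy | ⟨rfl, rfl⟩
    exacts [hM.1.1 _ _ hxy, hE]
  exact hMuv (hle u v (.inr ⟨rfl, rfl⟩))

def walkLengthsTo (R : V → V → Prop) (v : V) : Set ℕ :=
  {k | ∃ w : Fin (k + 1) → V, IsWalk R w ∧ w (Fin.last k) = v}

/-- Junk value `0` when the lengths of `R`-walks ending at `v` are unbounded. -/
noncomputable def walkHeight (R : V → V → Prop) (v : V) : ℕ :=
  sSup (walkLengthsTo R v)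

section walkHeight

variable {R : V → V → Prop} {L : ℕ} (hL : ∀ k (w : Fin (k + 1) → V), IsWalk R w → k < L)
include hL

theorem bddAbove_walkLengthsTo (v : V) : BddAbove (walkLengthsTo R v) :=
  ⟨L, fun _ ⟨w, hw, _⟩ => (hL _ w hw).le⟩

theorem walkHeight_mem_walkLengthsTo (v : V) : walkHeight R v ∈ walkLengthsTo R v :=
  Nat.sSup_mem ⟨0, fun _ => v, fun j => j.elim0, rfl⟩ (bddAbove_walkLengthsTo hL v)

theorem walkHeight_lt (v : V) : walkHeight R v < L :=
  let ⟨w, hw, _⟩ := walkHeight_mem_walkLengthsTo hL v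
  hL _ w hw

theorem walkHeight_lt_walkHeight_of_rel {u v : V} (huv : R u v) :
    walkHeight R u < walkHeight R v := by
  obtain ⟨w, hw, hwu⟩ := walkHeight_mem_walkLengthsTo hL u
  exact Nat.lt_of_succ_le <| le_csSup (bddAbove_walkLengthsTo hL v)
    ⟨_, hw.snoc (by rwa [hwu]), Fin.snoc_last _ _⟩

theorem walkHeight_lt_walkHeight {u v : V} (huv : TransGen R u v) :
    walkHeight R u < walkHeight R v := by
  induction huv with
  | single huv => exact walkHeight_lt_walkHeight_of_rel hL huv
  | tail _ hbc ih => exact ih.trans (walkHeight_lt_walkHeight_of_rel hL hbc)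

end walkHeight

theorem exists_fin_coloring_of_not_exists_injective_walk {E : V → V → Prop} {L : ℕ}
    (hE : ¬∃ w : Fin (L + 1) → V, Injective w ∧ IsWalk E w) :
    ∃ g : V → Fin L, ∀ u v, u ≠ v → E u v → g u ≠ g v := by
  obtain ⟨M, hM⟩ := exists_maximal_acyclic_le E
  have hL : ∀ k (w : Fin (k + 1) → V), IsWalk M w → k < L := by
    intro k w hw
    by_contra! hLk
    exact hE ⟨_, (hw.injective hM.1.2).comp (Fin.castLE_injective _),
      (hw.castLE hLk).mono hM.1.1⟩
  refine ⟨fun v => ⟨walkHeight M v, walkHeight_lt hL v⟩, fun u v huv hEuv hg => ?_⟩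
  have hg : walkHeight M u = walkHeight M v := congrArg Fin.val hg
  by_cases hMuv : M u v
  · exact (walkHeight_lt_walkHeight_of_rel hL hMuv).ne hg
  · rcases reflTransGen_iff_eq_or_transGen.1 (hM.reflTransGen_of_not_rel hEuv hMuv) with
      rfl | hvu
    · exact huv rfl
    · exact (walkHeight_lt_walkHeight hL hvu).ne' hg

end

theorem stmt4_general {V : Type*} (r : ℕ) (ℓ : Fin r → ℕ)
    (c : V → V → Fin (r + 1))
    (hc : ∀ i : Fin r, ¬∃ v : Fin (ℓ i + 1) → V, Function.Injective v ∧
      ∀ j : Fin (ℓ i), c (v j.castSucc) (v j.succ) = i.castSucc) :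
    ∃ f : V → Fin (∏ i, ℓ i), ∀ u v : V, u ≠ v → f u = f v →
      c u v = Fin.last r := by
  choose g hg using fun i =>
    exists_fin_coloring_of_not_exists_injective_walk (E := fun a b => c a b = i.castSucc) (hc i)
  refine ⟨fun v => finPiFinEquiv fun i => g i v, fun u v huv hf => ?_⟩
  by_contra hlast
  obtain ⟨i, hi⟩ := Fin.exists_castSucc_eq.2 hlast
  exact hg i u v huv hi.symm (congrFun (finPiFinEquiv.injective hf) i)

/-- Let `c` be an `(r+1)`-edge-colouring of a complete symmetric digraph on an
arbitrary vertex set `V` (colour `i : Fin r` via `i.castSucc`, last colour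
`Fin.last r`) such that for each `i ∈ [r]` there is no directed path of length
`ℓ i` in colour `i`. Then `V` can be partitioned into at most `∏ i, ℓ i` sets,
each spanning a complete symmetric digraph monochromatic in colour `r + 1`. -/
theorem stmt4 {V : Type*} (r : ℕ) (ℓ : Fin r → ℕ) (hℓ : ∀ i, 0 < ℓ i)
    (c : V → V → Fin (r + 1))
    (hc : ∀ i : Fin r, ¬∃ v : Fin (ℓ i + 1) → V, Function.Injective v ∧
      ∀ j : Fin (ℓ i), c (v j.castSucc) (v j.succ) = i.castSucc) :
    ∃ f : V → Fin (∏ i, ℓ i), ∀ u v : V, u ≠ v → f u = f v →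
      c u v = Fin.last r :=
  stmt4_general r ℓ c hc
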